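/- arXiv:1801.08848 — 5 statements merged into one kernel-verified Lean document; each statement's English description precedes it below -/
import Mathlib

section
/- Let p be a prime and y₁,…,yₙ ∈ ℚ_p with |y_i|_p ≤ 1 for all i, and let j ≥ 1. Then the set Γ = {(q₀,…,qₙ) ∈ ℤ^{n+1} : |q₀ + q₁y₁ + ⋯ + qₙyₙ|_p ≤ p^{-j} and |q_i|_p ≤ p^{-1} for i = 1,…,n} is a subgroup of ℤ^{n+1} of index p^{j+n}; equivalently, it is a full-rank lattice in ℝ^{n+1} of covolume p^{j+n}. -/
open scoped BigOperators

/-- For a prime `p`, `y₁,…,yₙ ∈ ℚ_p` with `|yᵢ|_p ≤ 1` and `j ≥ 1`,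
the set `Γ = {q ∈ ℤ^{n+1} : |q₀ + Σ qᵢ yᵢ|_p ≤ p^{-j}, |qᵢ|_p ≤ p^{-1} for i ≥ 1}`
is a subgroup of `ℤ^{n+1}` of index `p^{j+n}`. -/
theorem lattice_covolume (p : ℕ) [Fact p.Prime] (n j : ℕ) (hj : 1 ≤ j)
    (y : Fin n → ℚ_[p]) (hy : ∀ i, ‖y i‖ ≤ 1) :
    ∃ Γ : AddSubgroup (Fin (n + 1) → ℤ),
      (Γ : Set (Fin (n + 1) → ℤ)) =
        {q | ‖((q 0 : ℤ) : ℚ_[p]) + ∑ i : Fin n, ((q i.succ : ℤ) : ℚ_[p]) * y i‖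
              ≤ ((p : ℝ) ^ j)⁻¹ ∧
          ∀ i : Fin n, ‖((q i.succ : ℤ) : ℚ_[p])‖ ≤ (p : ℝ)⁻¹} ∧
      Γ.index = p ^ (j + n) := by
  classical
  haveI : NeZero (p ^ j) := ⟨pow_ne_zero _ (Fact.out (p := p.Prime)).ne_zero⟩
  set Y : Fin n → ℤ_[p] := fun i => ⟨y i, hy i⟩ with hY
  set S : (Fin (n + 1) → ℤ) → ℤ_[p] :=
    fun q => (q 0 : ℤ_[p]) + ∑ i : Fin n, (q i.succ : ℤ_[p]) * Y i with hS
  have hSadd : ∀ a b, S (a + b) = S a + S b := by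
    intro a b
    simp only [hS, Pi.add_apply, Int.cast_add, add_mul, Finset.sum_add_distrib]
    ring
  let f : (Fin (n + 1) → ℤ) →+ (ZMod (p ^ j) × (Fin n → ZMod p)) :=
    { toFun := fun q => (PadicInt.toZModPow j (S q), fun i => ((q i.succ : ℤ) : ZMod p)),
      map_zero' := Prod.ext (by simp [hS]) (by funext i; simp)
      map_add' := fun a b => by
        refine Prod.ext ?_ ?_
        · simp [hSadd, map_add]
        · funext i; simp }
  have hfq : ∀ q, f q = (PadicInt.toZModPow j (S q), fun i => ((q i.succ : ℤ) : ZMod p)) :=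
    fun q => rfl
  have hSc : ∀ q, ((S q : ℤ_[p]) : ℚ_[p]) =
      ((q 0 : ℤ) : ℚ_[p]) + ∑ i : Fin n, ((q i.succ : ℤ) : ℚ_[p]) * y i := by
    intro q
    simp only [hS]
    have coe_sum : ((∑ i : Fin n, (q i.succ : ℤ_[p]) * Y i : ℤ_[p]) : ℚ_[p]) =
        ∑ i : Fin n, (((q i.succ : ℤ_[p]) * Y i : ℤ_[p]) : ℚ_[p]) :=
      map_sum (PadicInt.Coe.ringHom (p := p)) _ _
    push_cast
    rw [coe_sum]
    push_cast
    simp [hY]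
  have hpj : ((p : ℝ) ^ j)⁻¹ = (p : ℝ) ^ (-j : ℤ) := by
    rw [zpow_neg, zpow_natCast]
  have key1 : ∀ q, PadicInt.toZModPow j (S q) = 0 ↔
      ‖((q 0 : ℤ) : ℚ_[p]) + ∑ i : Fin n, ((q i.succ : ℤ) : ℚ_[p]) * y i‖ ≤ ((p : ℝ) ^ j)⁻¹ := by
    intro q
    rw [← hSc, ← PadicInt.norm_def, hpj, PadicInt.norm_le_pow_iff_mem_span_pow,
      ← PadicInt.ker_toZModPow, RingHom.mem_ker]
  have key2 : ∀ k : ℤ, ((k : ZMod p) = 0) ↔ ‖(k : ℚ_[p])‖ ≤ (p : ℝ)⁻¹ := by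
    intro k
    rw [ZMod.intCast_zmod_eq_zero_iff_dvd]
    have := Padic.norm_int_le_pow_iff_dvd (p := p) k 1
    simp only [pow_one] at this
    rw [← this]
    norm_num
  refine ⟨f.ker, ?_, ?_⟩
  · ext q
    simp only [SetLike.mem_coe, AddMonoidHom.mem_ker, Set.mem_setOf_eq]
    constructor
    · intro h
      rw [hfq] at h
      have h1 : PadicInt.toZModPow j (S q) = 0 := congrArg Prod.fst h
      have h2' : (fun i : Fin n => ((q i.succ : ℤ) : ZMod p)) = (0 : Fin n → ZMod p) :=
        congrArg Prod.snd h
      have h2 : ∀ i : Fin n, ((q i.succ : ℤ) : ZMod p) = 0 := fun i => congrFun h2' i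
      exact ⟨(key1 q).mp h1, fun i => (key2 _).mp (h2 i)⟩
    · rintro ⟨h1, h2⟩
      rw [hfq]
      exact Prod.ext ((key1 q).mpr h1) (funext fun i => (key2 _).mpr (h2 i))
  · have hsurj : Function.Surjective f := by
      rintro ⟨a, b⟩
      set c : ℤ := ((a - PadicInt.toZModPow j
        (∑ i : Fin n, (((b i).val : ℤ) : ℤ_[p]) * Y i)).val : ℤ)
      refine ⟨Fin.cases c (fun i => ((b i).val : ℤ)), ?_⟩
      rw [hfq]
      refine Prod.ext ?_ ?_
      · simp only [hS, Fin.cases_zero, Fin.cases_succ]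
        rw [map_add, map_intCast]
        simp [c]
      · funext i
        simp [ZMod.natCast_val]
    rw [AddSubgroup.index_ker, AddMonoidHom.range_eq_top.mpr hsurj]
    rw [AddSubgroup.card_top]
    rw [Nat.card_prod, Nat.card_fun, Nat.card_zmod, Nat.card_zmod, Nat.card_eq_fintype_card,
      Fintype.card_fin, pow_add]
end

section
/- Let p be a prime, y₁,…,yₙ ∈ ℚ_p with |y_i|_p ≤ 1, and j ≥ 1. Define Γ = {(q₀,…,qₙ) ∈ ℤ^{n+1} : |q₀ + Σ q_i y_i|_p ≤ p^{-j}, and p ∣ q_i for i = 1,…,n}. Then Γ is generated (as a ℤ-module) by the vectors (p^j, 0, …, 0) and, for each i = 1,…,n, the vector (q_i, 0,…,0,−p,0,…,0) (with −p in position i+1), where q_i ∈ ℤ is any integer with |q_i − p·y_i|_p ≤ p^{-j}. -/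
open scoped BigOperators

theorem lattice_aux_pow_inv (p : ℕ) [Fact p.Prime] (j : ℕ) :
    ((p : ℝ) ^ j)⁻¹ = (p : ℝ) ^ (-(j : ℤ)) := by
  rw [zpow_neg, zpow_natCast]

/-- The lattice `Γ = {v ∈ ℤ^{n+1} : |v₀ + Σ vᵢ yᵢ|_p ≤ p^{-j}, p ∣ vᵢ (i ≥ 1)}`
is generated as a `ℤ`-module by `(p^j,0,…,0)` and the vectors `(qᵢ,0,…,0,−p,0,…,0)`
(with `−p` in position `i+1`), where `qᵢ ∈ ℤ` satisfies `|qᵢ − p·yᵢ|_p ≤ p^{-j}`. -/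
theorem lattice_generators (p : ℕ) [Fact p.Prime] (n j : ℕ) (hj : 1 ≤ j)
    (y : Fin n → ℚ_[p]) (hy : ∀ i, ‖y i‖ ≤ 1)
    (q : Fin n → ℤ) (hq : ∀ i, ‖((q i : ℤ) : ℚ_[p]) - (p : ℚ_[p]) * y i‖ ≤ ((p : ℝ) ^ j)⁻¹) :
    {v : Fin (n + 1) → ℤ |
        ‖((v 0 : ℤ) : ℚ_[p]) + ∑ i : Fin n, ((v i.succ : ℤ) : ℚ_[p]) * y i‖ ≤ ((p : ℝ) ^ j)⁻¹ ∧
        ∀ i : Fin n, (p : ℤ) ∣ v i.succ}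
      = (AddSubgroup.closure
          (insert (fun k : Fin (n + 1) => if k = 0 then (p : ℤ) ^ j else 0)
            (Set.range fun i : Fin n => fun k : Fin (n + 1) =>
              if k = 0 then q i else if k = i.succ then -(p : ℤ) else 0)) :
          AddSubgroup (Fin (n + 1) → ℤ)) := by
  have hp : (p : ℝ) ≠ 0 := by exact_mod_cast (Fact.out : p.Prime).ne_zero
  have hCnonneg : (0:ℝ) ≤ ((p : ℝ) ^ j)⁻¹ := by positivity
  set e : Fin (n + 1) → ℤ := fun k => if k = 0 then (p : ℤ) ^ j else 0 with he
  set g : Fin n → Fin (n + 1) → ℤ := fun i k =>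
    if k = 0 then q i else if k = i.succ then -(p : ℤ) else 0 with hg
  ext v
  simp only [Set.mem_setOf_eq, SetLike.mem_coe]
  constructor
  · rintro ⟨h1, h2⟩
    -- write v i.succ = p * d i
    choose d hd using h2
    -- the coefficient of e
    have hdvd : (p : ℤ) ^ j ∣ v 0 + ∑ i, d i * q i := by
      rw [← Padic.norm_int_le_pow_iff_dvd, ← lattice_aux_pow_inv]
      push_cast
      have key : ((v 0 : ℤ) : ℚ_[p]) + ∑ i, (d i : ℚ_[p]) * (q i : ℚ_[p]) =
          (((v 0 : ℤ) : ℚ_[p]) + ∑ i : Fin n, ((v i.succ : ℤ) : ℚ_[p]) * y i)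
          + ∑ i : Fin n, (d i : ℚ_[p]) * (((q i : ℤ) : ℚ_[p]) - (p : ℚ_[p]) * y i) := by
        have : ∀ i : Fin n, ((v i.succ : ℤ) : ℚ_[p]) = (p : ℚ_[p]) * (d i : ℚ_[p]) := by
          intro i; rw [hd i]; push_cast; ring
        simp_rw [this, mul_sub, ← mul_assoc, Finset.sum_sub_distrib]
        have h2 : ∀ i : Fin n, (d i : ℚ_[p]) * (p : ℚ_[p]) * y i
            = (p : ℚ_[p]) * (d i : ℚ_[p]) * y i := fun i => by ring
        simp_rw [h2]
        ring
      rw [key]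
      refine le_trans (Padic.nonarchimedean _ _) (max_le h1 ?_)
      refine IsUltrametricDist.norm_sum_le_of_forall_le_of_nonneg hCnonneg fun i _ => ?_
      rw [norm_mul]
      calc ‖(d i : ℚ_[p])‖ * ‖((q i : ℤ) : ℚ_[p]) - (p : ℚ_[p]) * y i‖
          ≤ 1 * ((p : ℝ) ^ j)⁻¹ :=
            mul_le_mul (Padic.norm_int_le_one _) (hq i) (norm_nonneg _)
              zero_le_one
        _ = ((p : ℝ) ^ j)⁻¹ := one_mul _
    obtain ⟨b, hb⟩ := hdvd
    -- v = b • e + ∑ i, (-(d i)) • g i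
    have hv : v = b • e + ∑ i : Fin n, (-(d i)) • g i := by
      funext k
      simp only [Pi.add_apply, Pi.smul_apply, Finset.sum_apply, smul_eq_mul, he, hg]
      rcases Fin.eq_zero_or_eq_succ k with hk | ⟨i, hk⟩
      · subst hk
        have hne : ∀ i : Fin n, ¬ ((0 : Fin (n+1)) = i.succ) :=
          fun i h => (Fin.succ_ne_zero i) h.symm
        simp only [if_pos rfl, eq_self_iff_true, if_true, hne, if_false]
        simp_rw [neg_mul, Finset.sum_neg_distrib]
        linarith [hb]
      · subst hk
        have h0 : i.succ ≠ (0 : Fin (n+1)) := Fin.succ_ne_zero i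
        simp only [if_neg h0]
        rw [Finset.sum_eq_single i]
        · rw [if_pos rfl, hd i]; ring
        · intro b' _ hb'
          rw [if_neg (fun h => hb' (Fin.succ_injective n h.symm))]
          ring
        · intro h; exact absurd (Finset.mem_univ i) h
    rw [hv]
    refine AddSubgroup.add_mem _ (AddSubgroup.zsmul_mem _ ?_ _) (AddSubgroup.sum_mem _ fun i _ => AddSubgroup.zsmul_mem _ ?_ _)
    · exact AddSubgroup.subset_closure (Set.mem_insert _ _)
    · exact AddSubgroup.subset_closure (Set.mem_insert_of_mem _ ⟨i, rfl⟩)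
  · intro hv
    -- show closure ≤ Γ where Γ is the set as a subgroup
    have key : ∀ w ∈ (insert e (Set.range g) : Set (Fin (n+1) → ℤ)),
        ‖((w 0 : ℤ) : ℚ_[p]) + ∑ i : Fin n, ((w i.succ : ℤ) : ℚ_[p]) * y i‖ ≤ ((p : ℝ) ^ j)⁻¹ ∧
        ∀ i : Fin n, (p : ℤ) ∣ w i.succ := by
      rintro w (rfl | ⟨i, rfl⟩)
      · constructor
        · simp only [he, if_pos rfl]
          have hz : ∀ i : Fin n, ((if (i.succ : Fin (n+1)) = 0 then ((p:ℤ))^j else 0 : ℤ) : ℚ_[p]) * y i = 0 := by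
            intro i
            rw [if_neg (Fin.succ_ne_zero i)]
            simp
          rw [Finset.sum_congr rfl fun i _ => hz i, Finset.sum_const_zero, add_zero]
          rw [lattice_aux_pow_inv]
          push_cast
          rw [show ((p:ℚ_[p]))^j = (((p:ℤ)^j : ℤ) : ℚ_[p]) by push_cast; ring]
          rw [Padic.norm_int_le_pow_iff_dvd]
        · intro i
          simp only [he, if_neg (Fin.succ_ne_zero i)]
          exact dvd_zero _
      · constructor
        · simp only [hg, if_pos rfl]
          have hz : ∀ i' : Fin n, ((if (i'.succ : Fin (n+1)) = 0 then q i else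
              if i'.succ = i.succ then -(p:ℤ) else 0 : ℤ) : ℚ_[p]) * y i' =
              (if i' = i then -((p:ℚ_[p])) * y i' else 0) := by
            intro i'
            rw [if_neg (Fin.succ_ne_zero i')]
            by_cases h : i' = i
            · subst h; rw [if_pos rfl, if_pos rfl]; push_cast; ring
            · rw [if_neg (fun hh => h (Fin.succ_injective n hh)), if_neg h]; simp
          rw [Finset.sum_congr rfl fun i' _ => hz i', Finset.sum_ite_eq' Finset.univ i,
            if_pos (Finset.mem_univ i)]
          calc ‖((q i : ℤ) : ℚ_[p]) + -(p:ℚ_[p]) * y i‖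
              = ‖((q i : ℤ) : ℚ_[p]) - (p:ℚ_[p]) * y i‖ := by ring_nf
            _ ≤ ((p : ℝ) ^ j)⁻¹ := hq i
        · intro i'
          simp only [hg, if_neg (Fin.succ_ne_zero i')]
          by_cases h : (i'.succ : Fin (n+1)) = i.succ
          · rw [if_pos h]; exact ⟨-1, by ring⟩
          · rw [if_neg h]; exact dvd_zero _
    -- Γ as a subgroup
    let Γ : AddSubgroup (Fin (n+1) → ℤ) := {
      carrier := {w : Fin (n + 1) → ℤ |
        ‖((w 0 : ℤ) : ℚ_[p]) + ∑ i : Fin n, ((w i.succ : ℤ) : ℚ_[p]) * y i‖ ≤ ((p : ℝ) ^ j)⁻¹ ∧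
        ∀ i : Fin n, (p : ℤ) ∣ w i.succ}
      zero_mem' := by
        constructor
        · simp [hCnonneg]
        · intro i; simp
      add_mem' := by
        rintro a b ⟨ha1, ha2⟩ ⟨hb1, hb2⟩
        constructor
        · have : (((a + b) 0 : ℤ) : ℚ_[p]) + ∑ i : Fin n, (((a + b) i.succ : ℤ) : ℚ_[p]) * y i =
              (((a 0 : ℤ) : ℚ_[p]) + ∑ i : Fin n, ((a i.succ : ℤ) : ℚ_[p]) * y i)
              + (((b 0 : ℤ) : ℚ_[p]) + ∑ i : Fin n, ((b i.succ : ℤ) : ℚ_[p]) * y i) := by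
            simp only [Pi.add_apply]
            push_cast
            rw [Finset.sum_congr rfl (fun i _ => by ring : ∀ i ∈ Finset.univ,
              ((a i.succ : ℚ_[p]) + (b i.succ : ℚ_[p])) * y i
                = (a i.succ : ℚ_[p]) * y i + (b i.succ : ℚ_[p]) * y i),
              Finset.sum_add_distrib]
            ring
          rw [this]
          exact le_trans (Padic.nonarchimedean _ _) (max_le ha1 hb1)
        · intro i; exact dvd_add (ha2 i) (hb2 i)
      neg_mem' := by
        rintro a ⟨ha1, ha2⟩
        constructor
        · have : (((-a) 0 : ℤ) : ℚ_[p]) + ∑ i : Fin n, (((-a) i.succ : ℤ) : ℚ_[p]) * y i =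
              -((((a 0 : ℤ) : ℚ_[p]) + ∑ i : Fin n, ((a i.succ : ℤ) : ℚ_[p]) * y i)) := by
            simp only [Pi.neg_apply]
            push_cast
            rw [neg_add, ← Finset.sum_neg_distrib]
            congr 1
            exact Finset.sum_congr rfl fun i _ => by ring
          rw [this, norm_neg]
          exact ha1
        · intro i; exact (ha2 i).neg_right }
    have : AddSubgroup.closure (insert e (Set.range g)) ≤ Γ :=
      AddSubgroup.closure_le Γ |>.mpr (fun w hw => key w hw)
    exact this hv
end

section
/- Let ξ_∞ ∈ ℝ and ξ_p ∈ ℚ_p, and let ε_∞, ε_p > 0 satisfy ε_∞ ≥ (1/2)·ε_p^{-1}·p. Then there exists a rational number r ∈ ℚ such that |r − ξ_∞|_∞ ≤ ε_∞, |r − ξ_p|_p ≤ ε_p, and |r|_q ≤ 1 for every prime q ≠ p. -/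
/-!
Choose `n : ℤ` with `p ^ (-n) ≤ ε_p` and `p ^ n < p / ε_p ≤ 2 ε_∞`. Since `ℤ[1/p]` is dense in
`ℚ_p`, some `s = a p ^ j` lies within `p ^ (-n)` of `ξ_p`. Shifting `s` by a multiple `k p ^ n`
does not spoil this `p`-adic estimate, nor the integrality of `s` at the primes `q ≠ p`, and a
suitable `k` brings it within `p ^ n / 2 ≤ ε_∞` of `ξ_∞`.
-/

theorem exists_zpow_neg_le_and_zpow_lt {x b : ℝ} (hx : 0 < x) (hb : 1 < b) :
    ∃ n : ℤ, b ^ (-n) ≤ x ∧ b ^ n < x⁻¹ * b := by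
  obtain ⟨k, hk, hk'⟩ := exists_mem_Ico_zpow hx hb
  refine ⟨-k, by rwa [neg_neg], ?_⟩
  rw [zpow_add₀ (by positivity), zpow_one] at hk'
  calc b ^ (-k) = (b ^ k * b)⁻¹ * b := by rw [zpow_neg]; field_simp
    _ < x⁻¹ * b := by gcongr

theorem exists_abs_add_intCast_mul_sub_le (s x : ℝ) {h : ℝ} (hh : 0 < h) :
    ∃ k : ℤ, |s + k * h - x| ≤ h / 2 := by
  refine ⟨round ((x - s) / h), ?_⟩
  have hsub : s + round ((x - s) / h) * h - x = -((x - s) / h - round ((x - s) / h)) * h := by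
    field_simp
    ring
  calc |s + round ((x - s) / h) * h - x| = |(x - s) / h - round ((x - s) / h)| * h := by
        rw [hsub, abs_mul, abs_neg, abs_of_pos hh]
    _ ≤ 1 / 2 * h := by gcongr; exact abs_sub_round _
    _ = h / 2 := by ring

theorem padicNorm_intCast_mul_zpow_le_one {p q : ℕ} [Fact p.Prime] [Fact q.Prime] (hqp : q ≠ p)
    (a j : ℤ) : padicNorm q (a * (p : ℚ) ^ j) ≤ 1 := by
  have hp : ‖(p : ℚ_[q])‖ = 1 := by
    rw [← Rat.cast_natCast, Padic.eq_padicNorm, padicNorm.padicNorm_of_prime_of_ne hqp,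
      Rat.cast_one]
  rw [← Rat.cast_le (K := ℝ), ← Padic.eq_padicNorm]
  push_cast
  rw [norm_mul, norm_zpow, hp, one_zpow, mul_one]
  exact Padic.norm_int_le_one a

variable {p : ℕ} [Fact p.Prime]

theorem PadicInt.exists_natCast_norm_sub_le (x : ℤ_[p]) (n : ℕ) :
    ∃ a : ℕ, ‖x - a‖ ≤ (p : ℝ) ^ (-n : ℤ) :=
  ⟨x.appr n, (x - _).norm_le_pow_iff_mem_span_pow n |>.mpr (x.appr_spec n)⟩

theorem Padic.exists_intCast_mul_zpow_norm_sub_le (ξ : ℚ_[p]) (n : ℤ) :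
    ∃ a j : ℤ, ‖(a : ℚ_[p]) * (p : ℚ_[p]) ^ j - ξ‖ ≤ (p : ℝ) ^ (-n) := by
  have hp : (1 : ℝ) < p := mod_cast (Fact.out : p.Prime).one_lt
  have hp' : (p : ℚ_[p]) ≠ 0 := by exact_mod_cast (Fact.out : p.Prime).ne_zero
  obtain ⟨m, hm⟩ := pow_unbounded_of_one_lt ‖ξ‖ hp
  have hy : ‖ξ * (p : ℚ_[p]) ^ m‖ ≤ 1 := by
    rw [norm_mul, norm_p_pow, zpow_neg, zpow_natCast]
    exact mul_inv_le_one_of_le₀ hm.le (by positivity)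
  obtain ⟨a, ha⟩ := PadicInt.exists_natCast_norm_sub_le ⟨_, hy⟩ (n.toNat + m)
  refine ⟨a, -m, ?_⟩
  have hsub : (a : ℚ_[p]) * (p : ℚ_[p]) ^ (-m : ℤ) - ξ =
      -(ξ * (p : ℚ_[p]) ^ m - a) * (p : ℚ_[p]) ^ (-m : ℤ) := by
    rw [zpow_neg, zpow_natCast]
    field_simp
    ring
  calc ‖(a : ℚ_[p]) * (p : ℚ_[p]) ^ (-m : ℤ) - ξ‖
      = ‖ξ * (p : ℚ_[p]) ^ m - a‖ * (p : ℝ) ^ (m : ℤ) := by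
        rw [hsub, norm_mul, norm_neg, norm_p_zpow, neg_neg]
    _ ≤ (p : ℝ) ^ (-(n.toNat + m : ℕ) : ℤ) * (p : ℝ) ^ (m : ℤ) := by gcongr; exact ha
    _ = (p : ℝ) ^ (-(n.toNat : ℤ)) := by
        rw [← zpow_add₀ (by positivity)]
        congr 1
        push_cast
        ring
    _ ≤ (p : ℝ) ^ (-n) := zpow_le_zpow_right₀ hp.le (by omega)

theorem strong_approximation_general (p : ℕ) [Fact p.Prime] (ξ_inf : ℝ) (ξ_p : ℚ_[p])
    (ε_inf ε_p : ℝ) (h_p : 0 < ε_p)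
    (h : ε_inf ≥ (1 / 2) * ε_p⁻¹ * p) :
    ∃ r : ℚ, |(r : ℝ) - ξ_inf| ≤ ε_inf ∧ ‖(r : ℚ_[p]) - ξ_p‖ ≤ ε_p ∧
      ∀ q : ℕ, q.Prime → q ≠ p → padicNorm q r ≤ 1 := by
  have hp : (1 : ℝ) < p := mod_cast (Fact.out : p.Prime).one_lt
  obtain ⟨n, hn_p, hn_inf⟩ := exists_zpow_neg_le_and_zpow_lt h_p hp
  obtain ⟨a, j, hs⟩ := Padic.exists_intCast_mul_zpow_norm_sub_le ξ_p n
  obtain ⟨k, hk⟩ :=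
    exists_abs_add_intCast_mul_sub_le (a * (p : ℝ) ^ j) ξ_inf (zpow_pos (by positivity : (0 : ℝ) < p) n)
  refine ⟨a * (p : ℚ) ^ j + k * (p : ℚ) ^ n, ?_, ?_, fun q hq hqp => ?_⟩
  · push_cast
    linarith
  · have hkp : ‖(k : ℚ_[p]) * (p : ℚ_[p]) ^ n‖ ≤ (p : ℝ) ^ (-n) := by
      rw [norm_mul, Padic.norm_p_zpow]
      exact mul_le_of_le_one_left (by positivity) (Padic.norm_int_le_one k)
    push_cast
    rw [add_sub_right_comm]
    exact (Padic.nonarchimedean _ _).trans (max_le hs hkp) |>.trans hn_p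
  · have : Fact q.Prime := ⟨hq⟩
    exact padicNorm.nonarchimedean.trans <| max_le
      (padicNorm_intCast_mul_zpow_le_one hqp a j) (padicNorm_intCast_mul_zpow_le_one hqp k n)

/-- (Strong approximation) Given `ξ_∞ ∈ ℝ`, `ξ_p ∈ ℚ_p` and
`ε_∞, ε_p > 0` with `ε_∞ ≥ (1/2)·ε_p⁻¹·p`, there is `r ∈ ℚ` with
`|r − ξ_∞| ≤ ε_∞`, `|r − ξ_p|_p ≤ ε_p`, and `|r|_q ≤ 1` for all primes `q ≠ p`. -/
theorem strong_approximation (p : ℕ) [Fact p.Prime] (ξ_inf : ℝ) (ξ_p : ℚ_[p])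
    (ε_inf ε_p : ℝ) (h_inf : 0 < ε_inf) (h_p : 0 < ε_p)
    (h : ε_inf ≥ (1 / 2) * ε_p⁻¹ * p) :
    ∃ r : ℚ, |(r : ℝ) - ξ_inf| ≤ ε_inf ∧ ‖(r : ℚ_[p]) - ξ_p‖ ≤ ε_p ∧
      ∀ q : ℕ, q.Prime → q ≠ p → padicNorm q r ≤ 1 :=
  strong_approximation_general p ξ_inf ξ_p ε_inf ε_p h_p h
end

section
/- Let n ≥ 1 and let ψ : ℕ → ℝ₊ be any function with Σ_{k=1}^∞ k^{n−1} ψ(k) < ∞. Then the set W_n(ψ) of x ∈ ℝ^n for which there exist infinitely many a ∈ ℤ^n \ {0} such that |a₀ + a·x| < ψ(‖a‖) for some a₀ ∈ ℤ has Lebesgue measure zero. -/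
/-!
Fix a box `[-M, M]ⁿ` and `a ∈ ℤⁿ` with `‖a‖ = k ≥ 1`, attained at the coordinate `i`. The linear
change of variables replacing `xᵢ` by `a · x` has determinant `aᵢ = ±k`, so each slab
`|a₀ + a · x| < ε` meets the box in measure at most `(2M)ⁿ⁻¹ · 2ε / k`; only `O(k)` values of `a₀`
contribute, hence the points of the box approximated by `a` form a set of measure `O(ε)`. There are
at most `2n (2k + 1)ⁿ⁻¹` vectors with `‖a‖ = k`, so `Σ k^(n-1) ψ(k) < ∞` makes these measures
summable over `a`, and the Borel–Cantelli lemma shows that almost every point of the box is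
approximated by only finitely many `a`.
-/

open MeasureTheory Metric Set
open scoped ENNReal

section SupNatAbs

variable {n : ℕ}

def supNatAbs (a : Fin n → ℤ) : ℕ := Finset.univ.sup fun i => (a i).natAbs

theorem natAbs_le_supNatAbs (a : Fin n → ℤ) (i : Fin n) : (a i).natAbs ≤ supNatAbs a :=
  Finset.le_sup (f := fun i => (a i).natAbs) (Finset.mem_univ i)

theorem supNatAbs_pos {a : Fin n → ℤ} (ha : a ≠ 0) : 0 < supNatAbs a := by
  obtain ⟨i, hi⟩ := Function.ne_iff.mp ha
  exact (Int.natAbs_pos.mpr hi).trans_le (natAbs_le_supNatAbs a i)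

theorem exists_natAbs_eq_supNatAbs [NeZero n] (a : Fin n → ℤ) :
    ∃ i, (a i).natAbs = supNatAbs a := by
  obtain ⟨i, -, hi⟩ := Finset.exists_mem_eq_sup Finset.univ Finset.univ_nonempty
    fun i => (a i).natAbs
  exact ⟨i, hi.symm⟩

theorem encard_supNatAbs_eq_le [NeZero n] (k : ℕ) :
    {a : Fin n → ℤ | supNatAbs a = k}.encard ≤ (2 * n * (2 * k + 1) ^ (n - 1) : ℕ) := by
  classical
  set face : Fin n → Finset (Fin n → ℤ) := fun i => Fintype.piFinset
    (Function.update (fun _ => Finset.Icc (-(k : ℤ)) k) i {-(k : ℤ), (k : ℤ)})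
  have hsub : {a : Fin n → ℤ | supNatAbs a = k} ⊆ ↑(Finset.univ.biUnion face) := by
    rintro a rfl
    obtain ⟨i, hi⟩ := exists_natAbs_eq_supNatAbs a
    simp only [Finset.coe_biUnion, Finset.coe_univ, mem_univ, iUnion_true, mem_iUnion]
    refine ⟨i, Fintype.mem_piFinset.mpr fun j => ?_⟩
    rcases eq_or_ne j i with rfl | hj
    · simp only [Function.update_self, Finset.mem_insert, Finset.mem_singleton]
      omega
    · have := natAbs_le_supNatAbs a j
      simp only [Function.update_of_ne hj, Finset.mem_Icc]
      omega
  have hface : ∀ i, (face i).card ≤ 2 * (2 * k + 1) ^ (n - 1) := fun i => by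
    rw [Fintype.card_piFinset]
    simp only [Function.apply_update (fun _ (s : Finset ℤ) => s.card)]
    rw [Finset.prod_update_of_mem (Finset.mem_univ i)]
    simp only [Finset.prod_const, Int.card_Icc, Finset.card_univ_sdiff, Finset.card_singleton,
      Fintype.card_fin]
    gcongr
    · exact Finset.card_le_two
    · omega
  calc _ ≤ ((Finset.univ.biUnion face).card : ℕ∞) := by
        rw [← Set.encard_coe_eq_coe_finsetCard]
        exact Set.encard_le_encard hsub
    _ ≤ _ := by
      gcongr
      refine Finset.card_biUnion_le.trans ((Finset.sum_le_sum fun i _ => hface i).trans ?_)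
      simp only [Finset.sum_const, Finset.card_univ, Fintype.card_fin, smul_eq_mul]
      exact le_of_eq (by ring)

theorem tsum_comp_supNatAbs_le [NeZero n] (g : ℕ → ℝ≥0∞) :
    ∑' a : Fin n → ℤ, g (supNatAbs a) ≤ ∑' k, (2 * n * (2 * k + 1) ^ (n - 1) : ℕ) * g k := by
  rw [← ENNReal.tsum_fiberwise _ supNatAbs]
  refine ENNReal.tsum_le_tsum fun k => ?_
  calc ∑' a : (supNatAbs ⁻¹' {k} : Set (Fin n → ℤ)), g (supNatAbs a.1)
        = ∑' _ : (supNatAbs ⁻¹' {k} : Set (Fin n → ℤ)), g k := tsum_congr fun a => congrArg g a.2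
    _ ≤ _ := by
      rw [ENNReal.tsum_set_const]
      gcongr
      exact_mod_cast encard_supNatAbs_eq_le k

theorem summable_two_mul_add_one_pow_mul {m : ℕ} {f : ℕ → ℝ} (hf : ∀ k, 0 ≤ f k)
    (hsum : Summable fun k : ℕ => (k : ℝ) ^ m * f k) :
    Summable fun k : ℕ => (2 * k + 1 : ℝ) ^ m * f k := by
  refine (summable_nat_add_iff 1).mp <|
    (((summable_nat_add_iff 1).mpr hsum).mul_left (3 ^ m)).of_nonneg_of_le
      (fun k => by have := hf (k + 1); positivity) fun k => ?_
  rw [← mul_assoc, ← mul_pow]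
  exact mul_le_mul_of_nonneg_right
    (pow_le_pow_left₀ (by positivity) (by push_cast; linarith) m) (hf _)

theorem tsum_ofReal_comp_supNatAbs_ne_top [NeZero n] {f : ℕ → ℝ} (hf : ∀ k, 0 ≤ f k)
    (hsum : Summable fun k : ℕ => (k : ℝ) ^ (n - 1) * f k) :
    ∑' a : Fin n → ℤ, ENNReal.ofReal (f (supNatAbs a)) ≠ ∞ := by
  refine ne_top_of_le_ne_top ?_ (tsum_comp_supNatAbs_le fun k => ENNReal.ofReal (f k))
  calc ∑' k, ((2 * n * (2 * k + 1) ^ (n - 1) : ℕ) : ℝ≥0∞) * ENNReal.ofReal (f k)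
      = ∑' k : ℕ, ENNReal.ofReal (2 * n * ((2 * (k : ℝ) + 1) ^ (n - 1) * f k)) :=
        tsum_congr fun k => by
          rw [← ENNReal.ofReal_natCast, ← ENNReal.ofReal_mul (by positivity)]
          push_cast
          ring_nf
    _ = ENNReal.ofReal (∑' k : ℕ, 2 * n * ((2 * (k : ℝ) + 1) ^ (n - 1) * f k)) :=
        (ENNReal.ofReal_tsum_of_nonneg (fun k => by have := hf k; positivity)
          ((summable_two_mul_add_one_pow_mul hf hsum).mul_left _)).symm
    _ ≠ ∞ := ENNReal.ofReal_ne_top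

end SupNatAbs

theorem volume_closedBall_inter_slab_le {n : ℕ} (a : Fin n → ℝ) {i : Fin n} (hi : a i ≠ 0)
    (c : ℝ) {M : ℝ} (hM : 0 ≤ M) (ε : ℝ) :
    volume (closedBall (0 : Fin n → ℝ) M ∩ {x | |c + ∑ j, a j * x j| < ε}) ≤
      ENNReal.ofReal ((2 * M) ^ (n - 1) * (2 * ε / |a i|)) := by
  classical
  -- `L` replaces the `i`-th coordinate by the linear form, mapping the slab into a box.
  set L := Matrix.toLin' ((1 : Matrix (Fin n) (Fin n) ℝ).updateRow i a)
  have hL : ∀ x, L x = Function.update x i (∑ j, a j * x j) := fun x => by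
    simp [L, Matrix.updateRow_mulVec, dotProduct]
  have hdet : LinearMap.det L = a i := by
    have hrow : ∑ k, a k • (1 : Matrix (Fin n) (Fin n) ℝ) k = a := by
      ext j
      simp [Matrix.one_apply]
    simpa [L, hrow] using Matrix.det_updateRow_sum (1 : Matrix (Fin n) (Fin n) ℝ) i a
  have hsub : closedBall 0 M ∩ {x | |c + ∑ j, a j * x j| < ε} ⊆
      L ⁻¹' univ.pi (Function.update (fun _ => closedBall 0 M) i (ball (-c) ε)) := by
    rintro x ⟨hx, hslab⟩ j -
    rw [closedBall_pi _ hM] at hx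
    rw [hL]
    rcases eq_or_ne j i with rfl | hj
    · simpa [Real.dist_eq, add_comm c] using hslab
    · simpa [hj] using hx j (mem_univ j)
  calc _ ≤ volume (L ⁻¹' _) := measure_mono hsub
    _ = ENNReal.ofReal |(a i)⁻¹| * (ENNReal.ofReal (2 * ε) * ENNReal.ofReal (2 * M) ^ (n - 1)) := by
      rw [Measure.addHaar_preimage_linearMap _ (hdet ▸ hi), hdet, volume_pi_pi]
      simp only [Function.apply_update (fun _ (s : Set ℝ) => volume s)]
      rw [Finset.prod_update_of_mem (Finset.mem_univ i)]
      simp [Real.volume_ball, Real.volume_closedBall, Finset.card_univ_sdiff]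
    _ = _ := by
      rw [← ENNReal.ofReal_pow (by positivity), ← ENNReal.ofReal_mul' (by positivity),
        ← ENNReal.ofReal_mul (abs_nonneg _), abs_inv]
      ring_nf

theorem abs_sum_intCast_mul_le {n : ℕ} (a : Fin n → ℤ) {x : Fin n → ℝ} {M : ℝ}
    (hx : x ∈ closedBall 0 M) : |∑ j, (a j : ℝ) * x j| ≤ n * supNatAbs a * M := by
  have hxj : ∀ j, |x j| ≤ M := fun j =>
    (norm_le_pi_norm x j).trans (mem_closedBall_zero_iff.mp hx)
  calc |∑ j, (a j : ℝ) * x j| ≤ ∑ j, |(a j : ℝ)| * |x j| := by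
        simpa only [abs_mul] using
          Finset.abs_sum_le_sum_abs (fun j => (a j : ℝ) * x j) Finset.univ
    _ ≤ ∑ _j : Fin n, (supNatAbs a : ℝ) * M := by
        gcongr with j
        · rw [← Int.cast_abs, ← Nat.cast_natAbs]
          exact_mod_cast natAbs_le_supNatAbs a j
        · exact hxj j
    _ = n * supNatAbs a * M := by simp [mul_assoc]

def approxSet {n : ℕ} (a : Fin n → ℤ) (ε : ℝ) : Set (Fin n → ℝ) :=
  {x | ∃ a₀ : ℤ, |(a₀ : ℝ) + ∑ j, (a j : ℝ) * x j| < ε}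

theorem volume_closedBall_inter_approxSet_le {n : ℕ} [NeZero n] {a : Fin n → ℤ} (ha : a ≠ 0)
    {M : ℝ} (hM : 0 ≤ M) {ε : ℝ} (hε : 0 ≤ ε) :
    volume (closedBall (0 : Fin n → ℝ) M ∩ approxSet a ε) ≤
      ENNReal.ofReal (2 * (2 * ε + 2 * n * M + 1) * (2 * M) ^ (n - 1) * ε) := by
  set k := supNatAbs a
  obtain ⟨i, hi⟩ := exists_natAbs_eq_supNatAbs a
  have hk : (1 : ℝ) ≤ k := by exact_mod_cast supNatAbs_pos ha
  have hai : |(a i : ℝ)| = k := by rw [← Int.cast_abs, ← Nat.cast_natAbs, hi]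
  set K := ⌊ε + n * k * M⌋₊
  have hcover : closedBall (0 : Fin n → ℝ) M ∩ approxSet a ε ⊆
      ⋃ a₀ ∈ Finset.Icc (-(K : ℤ)) K,
        closedBall 0 M ∩ {x | |(a₀ : ℝ) + ∑ j, (a j : ℝ) * x j| < ε} := by
    rintro x ⟨hx, a₀, hx₀⟩
    refine mem_biUnion (x := a₀) ?_ ⟨hx, hx₀⟩
    have hsum := abs_sum_intCast_mul_le a hx
    have htri := abs_sub_abs_le_abs_sub (a₀ : ℝ) (-∑ j, (a j : ℝ) * x j)
    rw [abs_neg, sub_neg_eq_add] at htri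
    have : a₀.natAbs ≤ K := Nat.le_floor <| by
      rw [Nat.cast_natAbs, Int.cast_abs]
      linarith
    rw [Finset.mem_coe, Finset.mem_Icc]
    omega
  have hK : (2 * K + 1 : ℝ) ≤ (2 * ε + 2 * n * M + 1) * k := by
    have := Nat.floor_le (show 0 ≤ ε + n * k * M by positivity)
    nlinarith
  calc _ ≤ ∑ a₀ ∈ Finset.Icc (-(K : ℤ)) K,
        volume (closedBall (0 : Fin n → ℝ) M ∩ {x | |(a₀ : ℝ) + ∑ j, (a j : ℝ) * x j| < ε}) :=
        (measure_mono hcover).trans (measure_biUnion_finset_le _ _)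
    _ ≤ ∑ _a₀ ∈ Finset.Icc (-(K : ℤ)) K, ENNReal.ofReal ((2 * M) ^ (n - 1) * (2 * ε / k)) := by
        gcongr with a₀
        rw [← hai]
        exact volume_closedBall_inter_slab_le _
          (abs_ne_zero.mp (hai ▸ (one_pos.trans_le hk).ne')) _ hM ε
    _ = (2 * K + 1) • ENNReal.ofReal ((2 * M) ^ (n - 1) * (2 * ε / k)) := by
        rw [Finset.sum_const, Int.card_Icc]
        congr 1
        omega
    _ ≤ _ := by
        rw [nsmul_eq_mul, ← ENNReal.ofReal_natCast, ← ENNReal.ofReal_mul (by positivity)]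
        refine ENNReal.ofReal_le_ofReal ?_
        calc ((2 * K + 1 : ℕ) : ℝ) * ((2 * M) ^ (n - 1) * (2 * ε / k))
            ≤ (2 * ε + 2 * n * M + 1) * k * ((2 * M) ^ (n - 1) * (2 * ε / k)) := by
              push_cast
              gcongr
          _ = _ := by field_simp

def dualWellApproximable (n : ℕ) (ψ : ℕ → ℝ) : Set (Fin n → ℝ) :=
  {x | {a : Fin n → ℤ | a ≠ 0 ∧ x ∈ approxSet a (ψ (supNatAbs a))}.Infinite}

theorem volume_dualWellApproximable_inter_closedBall {n : ℕ} [NeZero n] {ψ : ℕ → ℝ}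
    (hψ : ∀ k, 0 ≤ ψ k) (hsum : Summable fun k : ℕ => (k : ℝ) ^ (n - 1) * ψ k)
    {M : ℝ} (hM : 0 ≤ M) :
    volume (dualWellApproximable n ψ ∩ closedBall 0 M) = 0 := by
  set B := ∑' k : ℕ, (k : ℝ) ^ (n - 1) * ψ k
  have hψB : ∀ k, 1 ≤ k → ψ k ≤ B := fun k hk =>
    (le_mul_of_one_le_left (hψ k) (one_le_pow₀ (by exact_mod_cast hk))).trans
      (hsum.le_tsum k fun j _ => by have := hψ j; positivity)
  set C := 2 * (2 * B + 2 * n * M + 1) * (2 * M) ^ (n - 1)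
  have hC : 0 ≤ C := by
    have := (hψ 1).trans (hψB 1 le_rfl)
    positivity
  set s : (Fin n → ℤ) → Set (Fin n → ℝ) := fun a =>
    closedBall 0 M ∩ {x | a ≠ 0 ∧ x ∈ approxSet a (ψ (supNatAbs a))}
  have hs : ∀ a, volume (s a) ≤ ENNReal.ofReal (C * ψ (supNatAbs a)) := by
    intro a
    rcases eq_or_ne a 0 with rfl | ha
    · simp [s]
    refine (measure_mono (inter_subset_inter_right _ fun x hx => hx.2)).trans <|
      (volume_closedBall_inter_approxSet_le ha hM (hψ _)).trans <| ENNReal.ofReal_le_ofReal ?_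
    have := hψB _ (supNatAbs_pos ha)
    have := hψ (supNatAbs a)
    simp only [C]
    gcongr
  have hfin : ∑' a, volume (s a) ≠ ∞ := ne_top_of_le_ne_top
    (tsum_ofReal_comp_supNatAbs_ne_top (f := fun k => C * ψ k)
      (fun k => by have := hψ k; positivity)
      ((hsum.mul_left C).congr fun k => mul_left_comm _ _ _))
    (ENNReal.tsum_le_tsum hs)
  refine measure_mono_null ?_ (ae_iff.mp (ae_finite_setOfPred_mem hfin))
  rintro x ⟨hxW, hxM⟩ hfinite
  exact hxW (hfinite.subset fun a ha => ⟨hxM, ha⟩)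

theorem volume_dualWellApproximable {n : ℕ} [NeZero n] {ψ : ℕ → ℝ} (hψ : ∀ k, 0 ≤ ψ k)
    (hsum : Summable fun k : ℕ => (k : ℝ) ^ (n - 1) * ψ k) :
    volume (dualWellApproximable n ψ) = 0 := by
  rw [← inter_univ (dualWellApproximable n ψ), ← iUnion_closedBall_nat 0, inter_iUnion]
  exact measure_iUnion_null fun M =>
    volume_dualWellApproximable_inter_closedBall hψ hsum (Nat.cast_nonneg M)

/-- (Convergence case of the Khintchine–Groshev theorem.)
If `Σ k^{n−1} ψ(k) < ∞`, then the set of `x ∈ ℝ^n` admitting infinitely many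
`a ∈ ℤ^n \ {0}` with `|a₀ + a·x| < ψ(‖a‖)` for some `a₀ ∈ ℤ` is Lebesgue null. -/
theorem khintchine_groshev_convergence (n : ℕ) (hn : 1 ≤ n)
    (ψ : ℕ → ℝ) (hψ : ∀ k, 0 < ψ k)
    (hsum : Summable fun k : ℕ => (k : ℝ) ^ (n - 1) * ψ k) :
    MeasureTheory.volume
      {x : Fin n → ℝ |
        {a : Fin n → ℤ | a ≠ 0 ∧ ∃ a₀ : ℤ,
          |(a₀ : ℝ) + ∑ i, (a i : ℝ) * x i| <
            ψ (Finset.univ.sup fun i => (a i).natAbs)}.Infinite} = 0 := by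
  have : NeZero n := ⟨by omega⟩
  exact volume_dualWellApproximable (fun k => (hψ k).le) hsum
end

section
/- Let ψ : ℕ → ℝ₊ be an approximating function with lower order τ_ψ := liminf_{t→∞} (−log ψ(t))/(log t) < ∞. Then for every real s with m − 1 < s < m − 1 + (n+1)/τ_ψ, the series Σ_{a ∈ ℤ^{n+1}\{0}} ψ(‖a‖)^{s+1−m} diverges. -/
/-!
Fix `c` with `τ < c < (n + 1) / σ`, where `σ = s + 1 - m > 0`. Since the lower order of `1/ψ`
is below `c`, infinitely often `ψ t > t^(-c)`. For such `t`, the `t^(n+1)` vectors of the box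
`{1, …, t}^(n+1)` all have sup norm at most `t`, so by monotonicity of `ψ` they contribute at
least `t^(n+1) ψ(t)^σ ≥ t^(n + 1 - σc)` to the series, and this tends to infinity.
-/

open Filter

section SupNormBox

variable {ι : Type*} [Fintype ι] [Nonempty ι]

/-- The box `{1, …, t}^ι`, reached from `Fin t = {0, …, t - 1}` by a shift. -/
def boxEmbedding (t : ℕ) : (ι → Fin t) ↪ {a : ι → ℤ // a ≠ 0} where
  toFun b := ⟨fun i => (b i : ℤ) + 1, fun h => by
    have := congrFun h (Classical.arbitrary ι)
    simp only [Pi.zero_apply] at this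
    omega⟩
  inj' b b' h := funext fun i => Fin.ext (by
    have := congrFun (congrArg Subtype.val h) i
    simp only at this
    omega)

lemma sup_natAbs_boxEmbedding_le {t : ℕ} (b : ι → Fin t) :
    (Finset.univ.sup fun i => ((boxEmbedding t b : ι → ℤ) i).natAbs) ≤ t :=
  Finset.sup_le fun i _ => by
    change ((b i : ℤ) + 1).natAbs ≤ t
    omega

omit [Nonempty ι] in
lemma one_le_sup_natAbs {a : ι → ℤ} (ha : a ≠ 0) : 1 ≤ Finset.univ.sup fun i => (a i).natAbs := by
  obtain ⟨i, hi⟩ := Function.ne_iff.mp ha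
  exact le_trans (by simp only [Pi.zero_apply] at hi; omega)
    (Finset.le_sup (f := fun j => (a j).natAbs) (Finset.mem_univ i))

lemma pow_card_mul_le_tsum_of_antitoneOn {φ : ℕ → ℝ} (hφ : AntitoneOn φ (Set.Ici 1))
    (hφ0 : ∀ k, 1 ≤ k → 0 ≤ φ k)
    (hsum : Summable fun a : {a : ι → ℤ // a ≠ 0} => φ (Finset.univ.sup fun i => (a.1 i).natAbs))
    {t : ℕ} (ht : 1 ≤ t) :
    (t : ℝ) ^ Fintype.card ι * φ t ≤
      ∑' a : {a : ι → ℤ // a ≠ 0}, φ (Finset.univ.sup fun i => (a.1 i).natAbs) := by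
  classical
  calc (t : ℝ) ^ Fintype.card ι * φ t = ∑ _b : ι → Fin t, φ t := by
        simp [Finset.card_univ]
    _ ≤ ∑ b : ι → Fin t, φ (Finset.univ.sup fun i => ((boxEmbedding t b : ι → ℤ) i).natAbs) :=
        Finset.sum_le_sum fun b _ =>
          hφ (one_le_sup_natAbs (boxEmbedding t b).2) (Set.mem_Ici.2 ht)
            (sup_natAbs_boxEmbedding_le b)
    _ = ∑ a ∈ Finset.univ.map (boxEmbedding t), φ (Finset.univ.sup fun i => (a.1 i).natAbs) :=
        (Finset.sum_map _ _ (fun a : {a : ι → ℤ // a ≠ 0} =>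
          φ (Finset.univ.sup fun i => (a.1 i).natAbs))).symm
    _ ≤ _ := hsum.sum_le_tsum _ fun a _ => hφ0 _ (one_le_sup_natAbs a.2)

end SupNormBox

lemma Real.rpow_neg_lt_of_neg_log_div_log_lt {x y c : ℝ} (hx : 1 < x) (hy : 0 < y)
    (h : -Real.log y / Real.log x < c) : x ^ (-c) < y := by
  have hlogx : 0 < Real.log x := Real.log_pos hx
  rw [div_lt_iff₀ hlogx] at h
  rw [← Real.log_lt_log_iff (Real.rpow_pos_of_pos (by linarith) _) hy,
    Real.log_rpow (by linarith)]
  linarith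

lemma frequently_rpow_neg_lt {ψ : ℕ → ℝ} (hpos : ∀ k : ℕ, 1 ≤ k → 0 < ψ k) {c : ℝ}
    (h : ∃ᶠ t : ℕ in atTop, -Real.log (ψ t) / Real.log t < c) :
    ∃ᶠ t : ℕ in atTop, (t : ℝ) ^ (-c) < ψ t :=
  (h.and_eventually (eventually_ge_atTop 2)).mono fun t ⟨ht, ht2⟩ =>
    Real.rpow_neg_lt_of_neg_log_div_log_lt (by exact_mod_cast ht2) (hpos t (by omega)) ht

lemma Real.rpow_sub_mul_le_rpow_mul_rpow {x y c d σ : ℝ} (hx : 0 < x) (hxy : x ^ (-c) ≤ y)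
    (hσ : 0 ≤ σ) : x ^ (d - σ * c) ≤ x ^ d * y ^ σ := by
  calc x ^ (d - σ * c) = x ^ d * (x ^ (-c)) ^ σ := by
        rw [← Real.rpow_mul hx.le, ← Real.rpow_add hx]
        ring_nf
    _ ≤ x ^ d * y ^ σ := by gcongr

theorem divergence_below_critical_exponent_general (n m : ℕ)
    (ψ : ℕ → ℝ) (hpos : ∀ k : ℕ, 1 ≤ k → 0 < ψ k) (hmono : Antitone ψ)
    (τ : ℝ)
    (hub : ∀ ε : ℝ, 0 < ε →
      ∃ᶠ t : ℕ in atTop, -Real.log (ψ t) / Real.log t < τ + ε)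
    (s : ℝ) (h1 : (m : ℝ) - 1 < s) (h2 : s < (m : ℝ) - 1 + ((n : ℝ) + 1) / τ) :
    ¬ Summable fun a : {a : Fin (n + 1) → ℤ // a ≠ 0} =>
      ψ (Finset.univ.sup fun i => ((a : Fin (n + 1) → ℤ) i).natAbs) ^ (s + 1 - m) := by
  intro hsum
  set σ : ℝ := s + 1 - m
  have hσ : 0 < σ := by linarith
  have hτ : 0 < τ := by
    by_contra! hτ
    linarith [div_nonpos_of_nonneg_of_nonpos (by positivity : (0 : ℝ) ≤ n + 1) hτ]
  obtain ⟨c, hτc, hcσ⟩ := exists_between (show τ < ((n : ℝ) + 1) / σ by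
    rw [lt_div_iff₀ hσ, mul_comm, ← lt_div_iff₀ hτ]; linarith)
  have hδ : 0 < (n : ℝ) + 1 - σ * c := by rw [lt_div_iff₀ hσ] at hcσ; linarith
  have hφ : AntitoneOn (fun k => ψ k ^ σ) (Set.Ici 1) := fun a ha b _ hab =>
    Real.rpow_le_rpow (hpos b (le_trans ha hab)).le (hmono hab) hσ.le
  have hgrowth := ((tendsto_rpow_atTop hδ).comp tendsto_natCast_atTop_atTop).eventually_gt_atTop
    (∑' a : {a : Fin (n + 1) → ℤ // a ≠ 0}, ψ (Finset.univ.sup fun i => (a.1 i).natAbs) ^ σ)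
  obtain ⟨t, hψt, ht, hlarge⟩ := (frequently_rpow_neg_lt hpos
    (by simpa using hub (c - τ) (sub_pos.2 hτc))).and_eventually
    ((eventually_ge_atTop 1).and hgrowth) |>.exists
  have hbound := pow_card_mul_le_tsum_of_antitoneOn hφ
    (fun k hk => Real.rpow_nonneg (hpos k hk).le _) hsum ht
  have hbox := Real.rpow_sub_mul_le_rpow_mul_rpow (d := (n : ℝ) + 1)
    (by exact_mod_cast ht) hψt.le hσ.le
  rw [Fintype.card_fin, ← Real.rpow_natCast, Nat.cast_succ] at hbound
  simp only [Function.comp_apply] at hlarge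
  linarith

/-- If the lower order `τ_ψ = liminf_{t→∞} (−log ψ(t))/(log t)` of `1/ψ`
is finite (expressed by the standard `ε`-characterisation of a finite liminf `τ`), then
for every `s` with `m − 1 < s < m − 1 + (n+1)/τ` the series
`Σ_{a ∈ ℤ^{n+1}\{0}} ψ(‖a‖)^{s+1−m}` diverges. -/
theorem divergence_below_critical_exponent (n m : ℕ) (hn : 1 ≤ n) (hm : 1 ≤ m)
    (ψ : ℕ → ℝ) (hpos : ∀ k : ℕ, 1 ≤ k → 0 < ψ k) (hmono : Antitone ψ)
    (τ : ℝ)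
    (hlb : ∀ ε : ℝ, 0 < ε →
      ∀ᶠ t : ℕ in atTop, τ - ε < -Real.log (ψ t) / Real.log t)
    (hub : ∀ ε : ℝ, 0 < ε →
      ∃ᶠ t : ℕ in atTop, -Real.log (ψ t) / Real.log t < τ + ε)
    (s : ℝ) (h1 : (m : ℝ) - 1 < s) (h2 : s < (m : ℝ) - 1 + ((n : ℝ) + 1) / τ) :
    ¬ Summable fun a : {a : Fin (n + 1) → ℤ // a ≠ 0} =>
      ψ (Finset.univ.sup fun i => ((a : Fin (n + 1) → ℤ) i).natAbs) ^ (s + 1 - m) :=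
  divergence_below_critical_exponent_general n m ψ hpos hmono τ hub s h1 h2
end
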